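/- arXiv:1503.03441 — 7 statements merged into one kernel-verified Lean document; each statement's English description precedes it below -/
import Mathlib

section
/- Let $k\ge 3$, $\ell\ge 2$ be integers and $0<\varepsilon<1/4$. Let $G=(V_1\cup\cdots\cup V_\ell,E)$ be an $\ell$-partite graph with $d(V_i,V_j)\ge \frac{k-2}{k-1}$ for all $i\ne j$. Suppose each $V_i$ is partitioned as $V_i = X_i^{(1)}\,\dot\cup\cdots\dot\cup\, X_i^{(k-1)}\,\dot\cup\, T_i$ with $|X_i^{(1)}|\ge\cdots\ge|X_i^{(k-1)}|$ and $|T_i|\le\varepsilon|V_i|$, and for each $s\le k-1$ the set $\bigcup_{i\le\ell} X_i^{(s)}$ is independent in $G$. Then for each $s\le k-1$ there is at most one index $i\le\ell$ with $|X_i^{(s)}|/|V_i| > \frac{1}{k-1}+\sqrt{\varepsilon}$; consequently there is a set $I_0$ of at most $k-1$ indices such that $|X_i^{(s)}| = \left(\frac{1}{k-1}\pm k\sqrt{\varepsilon}\right)|V_i|$ for all $s\le k-1$ and all $i\notin I_0$. -/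
open Finset

/-- Number of edges (ordered pairs) between `A` and `B`. -/
noncomputable def eBetween {V : Type*} (G : SimpleGraph V) (A B : Finset V) : ℕ :=
  Nat.card {p : V × V // p.1 ∈ A ∧ p.2 ∈ B ∧ G.Adj p.1 p.2}

/-- Edge density between two disjoint vertex sets. -/
noncomputable def density {V : Type*} (G : SimpleGraph V) (A B : Finset V) : ℝ :=
  (eBetween G A B : ℝ) / ((A.card : ℝ) * (B.card : ℝ))

/-- Number of neighbours of `v` inside the set `S`. -/
noncomputable def degTo {V : Type*} (G : SimpleGraph V) (v : V) (S : Set V) : ℕ :=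
  Nat.card {u : V // u ∈ S ∧ G.Adj v u}

/-- `G` is an `ℓ`-partite graph with (nonempty, independent) parts `P 0, …, P (ℓ-1)`. -/
def IsPartiteOn {V : Type*} (G : SimpleGraph V) {ℓ : ℕ} (P : Fin ℓ → Finset V) : Prop :=
  (∀ i, (P i).Nonempty) ∧ (∀ i j, i ≠ j → Disjoint (P i) (P j)) ∧
  (∀ v, ∃ i, v ∈ P i) ∧ ∀ i, ∀ a ∈ P i, ∀ b ∈ P i, ¬ G.Adj a b

/-- `G` contains a copy of `H` (an injective graph homomorphism). -/
def ContainsCopy {W V : Type*} (H : SimpleGraph W) (G : SimpleGraph V) : Prop :=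
  ∃ f : W → V, Function.Injective f ∧ ∀ a b, H.Adj a b → G.Adj (f a) (f b)

/-- `H` admits a colouring with `χ(H) - 1` colours in which all colour classes are
independent except the first, which induces a graph of maximum degree at most 1. -/
def AlmostColourCritical {W : Type*} [Fintype W] (H : SimpleGraph W) : Prop :=
  ∃ k : ℕ, H.chromaticNumber = (k : ℕ∞) ∧
    ∃ φ : W → Fin (k - 1),
      (∀ a b c : W, (φ a).val = 0 → (φ b).val = 0 → (φ c).val = 0 →
        H.Adj a b → H.Adj a c → b = c) ∧
      ∀ a b : W, (φ a).val ≠ 0 → φ a = φ b → ¬ H.Adj a b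

/-! Fix `i ≠ j` and write `a t = #(X i t)`, `b t = #(X j t)`, `m = k - 1`. The pairs in
`X i t ×ˢ X j t` are non-edges, so the density bound gives `m * ∑ a b ≤ #(P i) * #(P j)`.
Both sequences are antitone, so every term of `∑_{t,u} (a t - a u) * (b t - b u)` is nonnegative;
keeping only the terms involving one index `s` and applying Chebyshev's inequality to them gives
`(m a_s - ∑ a) * (m b_s - ∑ b) ≤ m * (m ∑ a b - ∑ a ∑ b)`. If both `a s` and `b s` exceed
`(1/m + √ε)` times their part, the left side exceeds `m² ε #(P i) #(P j)`, which outweighs the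
relative loss of at most `2ε` in `∑ a ∑ b` caused by the leftover sets `T`.
So each `s` has at most one large class; for the other indices `#(X i s)` is at least what the
remaining `m - 1` classes, each at most `(1/m + √ε) #(P i)`, leave of `(1 - ε) #(P i)`. -/

section Chebyshev

variable {ι : Type*} [Fintype ι] {f g : ι → ℝ}

theorem sum_sum_sub_mul_sub (f g : ι → ℝ) :
    ∑ i, ∑ j, (f i - f j) * (g i - g j) =
      2 * (Fintype.card ι * ∑ i, f i * g i - (∑ i, f i) * ∑ i, g i) := by
  simp only [sub_mul, mul_sub, sum_sub_distrib, sum_const, card_univ, nsmul_eq_mul,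
    ← mul_sum, ← sum_mul]
  ring

theorem Monovary.sum_sub_mul_sub_le (hfg : Monovary f g) (i : ι) :
    ∑ j, (f i - f j) * (g i - g j) ≤
      Fintype.card ι * ∑ i, f i * g i - (∑ i, f i) * ∑ i, g i := by
  classical
  set F : ι → ι → ℝ := fun i j => (f i - f j) * (g i - g j)
  have hF : ∀ i j, 0 ≤ F i j := fun i j => hfg.sub_mul_sub_nonneg j i
  have hrow : ∀ j, F j i ≤ ∑ k, F j k := fun j => single_le_sum (fun k _ => hF j k) (mem_univ i)
  have hcol : ∑ j ∈ univ.erase i, F j i = ∑ j, F i j :=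
    (sum_erase _ (by simp [F])).trans (sum_congr rfl fun j _ => by simp only [F]; ring)
  -- Row `i` and column `i` of `F` have the same sum, and together they fit in the total.
  have htotal : ∑ j, ∑ k, F j k = _ := sum_sum_sub_mul_sub f g
  have hsplit := add_sum_erase univ (fun j => ∑ k, F j k) (mem_univ i)
  have := sum_le_sum fun j (_ : j ∈ univ.erase i) => hrow j
  linarith

theorem Monovary.card_mul_sub_sum_mul_le (hfg : Monovary f g) (i : ι) :
    (Fintype.card ι * f i - ∑ j, f j) * (Fintype.card ι * g i - ∑ j, g j) ≤
      Fintype.card ι * (Fintype.card ι * ∑ j, f j * g j - (∑ j, f j) * ∑ j, g j) := by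
  have hshift : Monovary (fun j => f i - f j) (fun j => g i - g j) :=
    fun j k h => by simp only at h ⊢; linarith [hfg (by linarith : g k < g j)]
  have := hshift.sum_mul_sum_le_card_mul_sum
  simp only [sum_sub_distrib, sum_const, card_univ, nsmul_eq_mul] at this
  exact this.trans (mul_le_mul_of_nonneg_left (hfg.sum_sub_mul_sub_le i) (by positivity))

theorem Monovary.mul_lt_card_mul_sum_mul {a b : ι → ℝ} (hab : Monovary a b)
    (hι : 2 ≤ Fintype.card ι) {δ p q : ℝ} (hδ : 0 ≤ δ) (hδ1 : δ ^ 2 ≤ 1) (hp : 0 ≤ p) (hq : 0 ≤ q)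
    (ha : ∑ t, a t ≤ p) (hb : ∑ t, b t ≤ q)
    (ha' : (1 - δ ^ 2) * p ≤ ∑ t, a t) (hb' : (1 - δ ^ 2) * q ≤ ∑ t, b t) {s : ι}
    (has : (1 / Fintype.card ι + δ) * p < a s) (hbs : (1 / Fintype.card ι + δ) * q < b s) :
    p * q < Fintype.card ι * ∑ t, a t * b t := by
  have hn : (2 : ℝ) ≤ Fintype.card ι := by exact_mod_cast hι
  set n : ℝ := (Fintype.card ι : ℝ)
  have hexcess : ∀ (c : ι → ℝ) (r : ℝ), ∑ t, c t ≤ r → (1 / n + δ) * r < c s →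
      n * δ * r < n * c s - ∑ t, c t := fun c r hc hcs => by
    have := mul_lt_mul_of_pos_left hcs (by positivity : 0 < n)
    rw [← mul_assoc, mul_add, mul_one_div_cancel (by positivity)] at this
    linarith
  have hprod : n * δ * p * (n * δ * q) <
      (n * a s - ∑ t, a t) * (n * b s - ∑ t, b t) :=
    mul_lt_mul'' (hexcess a p ha has) (hexcess b q hb hbs) (by positivity) (by positivity)
  have hcheb := hab.card_mul_sub_sum_mul_le s
  have hsums : (1 - δ ^ 2) * p * ((1 - δ ^ 2) * q) ≤ (∑ t, a t) * ∑ t, b t :=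
    mul_le_mul ha' hb' (by nlinarith) (by nlinarith)
  have hgap : n * δ ^ 2 * (p * q) < n * ∑ t, a t * b t - (∑ t, a t) * ∑ t, b t := by
    nlinarith
  nlinarith [mul_nonneg (mul_nonneg hδ hδ) (mul_nonneg hp hq)]

end Chebyshev

section Graph

open Function

variable {V : Type*} (G : SimpleGraph V)

lemma eBetween_eq_card_filter [DecidableRel G.Adj] (A B : Finset V) :
    eBetween G A B = #{p ∈ A ×ˢ B | G.Adj p.1 p.2} := by
  rw [eBetween, ← Nat.card_eq_finsetCard]
  exact Nat.card_congr (Equiv.subtypeEquivRight fun p => by simp [and_assoc])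

variable {κ : Type*} [Fintype κ] {G} {A B : Finset V} {X Y : κ → Finset V}

lemma eBetween_add_sum_card_mul_card_le (hXA : ∀ t, X t ⊆ A) (hYB : ∀ t, Y t ⊆ B)
    (hX : Pairwise (Disjoint on X)) (hXY : ∀ t, ∀ a ∈ X t, ∀ b ∈ Y t, ¬ G.Adj a b) :
    eBetween G A B + ∑ t, #(X t) * #(Y t) ≤ #A * #B := by
  classical
  set N := univ.biUnion fun t => X t ×ˢ Y t
  have hN : #N = ∑ t, #(X t) * #(Y t) := by
    rw [card_biUnion fun s _ t _ hst => disjoint_product.2 (Or.inl (hX hst))]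
    simp only [card_product]
  have hdisj : Disjoint {p ∈ A ×ˢ B | G.Adj p.1 p.2} N := by
    simp only [disjoint_left, mem_filter, N, mem_biUnion, mem_product]
    rintro ⟨a, b⟩ ⟨-, hab⟩ ⟨t, -, ha, hb⟩
    exact hXY t a ha b hb hab
  have hsub : {p ∈ A ×ˢ B | G.Adj p.1 p.2} ∪ N ⊆ A ×ˢ B :=
    union_subset (filter_subset _ _) (biUnion_subset.2 fun t _ => product_subset_product
      (hXA t) (hYB t))
  rw [eBetween_eq_card_filter, ← hN, ← card_union_of_disjoint hdisj, ← card_product]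
  exact card_le_card hsub

lemma sum_card_mul_card_le_of_le_density {c : ℝ} (hXA : ∀ t, X t ⊆ A) (hYB : ∀ t, Y t ⊆ B)
    (hX : Pairwise (Disjoint on X)) (hXY : ∀ t, ∀ a ∈ X t, ∀ b ∈ Y t, ¬ G.Adj a b)
    (hc : c ≤ density G A B) :
    ∑ t, (#(X t) : ℝ) * #(Y t) ≤ (1 - c) * (#A * #B) := by
  have hcount : (eBetween G A B : ℝ) + ∑ t, (#(X t) : ℝ) * #(Y t) ≤ #A * #B := by
    exact_mod_cast eBetween_add_sum_card_mul_card_le hXA hYB hX hXY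
  rcases (by positivity : (0 : ℝ) ≤ #A * #B).eq_or_lt with hAB | hAB
  · rw [← hAB] at hcount ⊢
    linarith [(eBetween G A B).cast_nonneg (α := ℝ)]
  · have := (le_div_iff₀ hAB).1 hc
    linarith

end Graph

section Partition

open Function

variable {V κ : Type*} [Fintype κ] {X : κ → Finset V} {P T : Finset V}

lemma sum_card_le_card_of_pairwise_disjoint (hX : Pairwise (Disjoint on X))
    (hXP : ∀ t, X t ⊆ P) : ∑ t, #(X t) ≤ #P := by
  classical
  rw [← card_biUnion fun s _ t _ hst => hX hst]
  exact card_le_card (biUnion_subset.2 fun t _ => hXP t)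

lemma card_le_card_add_sum_card (hcover : ∀ v ∈ P, v ∈ T ∨ ∃ t, v ∈ X t) :
    #P ≤ #T + ∑ t, #(X t) := by
  classical
  calc #P ≤ #(T ∪ univ.biUnion X) := card_le_card fun v hv => by
          rcases hcover v hv with hT | ⟨t, ht⟩
          · exact mem_union_left _ hT
          · exact mem_union_right _ (mem_biUnion.2 ⟨t, mem_univ t, ht⟩)
    _ ≤ #T + #(univ.biUnion X) := card_union_le _ _
    _ ≤ #T + ∑ t, #(X t) := Nat.add_le_add_left card_biUnion_le _

end Partition

lemma sub_mul_le_of_le_sum_of_forall_le {ι : Type*} [Fintype ι] {a : ι → ℝ} {L c : ℝ}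
    (hL : L ≤ ∑ t, a t) (hc : ∀ t, a t ≤ c) (s : ι) : L - (Fintype.card ι - 1) * c ≤ a s := by
  classical
  have hι : 1 ≤ Fintype.card ι := Fintype.card_pos_iff.2 ⟨s⟩
  have hrest : ∑ t ∈ univ.erase s, a t ≤ (Fintype.card ι - 1) * c := by
    simpa [card_erase_of_mem, Nat.cast_sub hι] using
      sum_le_card_nsmul (univ.erase s) a c fun t _ => hc t
  linarith [add_sum_erase univ a (mem_univ s)]

lemma exists_finset_card_le_of_forall_subsingleton {ι κ : Type*} [Fintype ι] [Fintype κ]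
    (Q : κ → ι → Prop) (hQ : ∀ s, {i | Q s i}.Subsingleton) :
    ∃ I : Finset ι, #I ≤ Fintype.card κ ∧ ∀ i ∉ I, ∀ s, ¬ Q s i := by
  classical
  refine ⟨univ.biUnion fun s => {i | Q s i}, ?_, fun i hi s hs => hi (by simpa using ⟨s, hs⟩)⟩
  calc _ ≤ ∑ s, #{i | Q s i} := card_biUnion_le
    _ ≤ ∑ _s : κ, 1 := sum_le_sum fun s _ => card_le_one.2 fun i hi j hj =>
        hQ s (by simpa using hi) (by simpa using hj)
    _ = Fintype.card κ := by simp

theorem balanced_classes_general {V : Type*} (G : SimpleGraph V) (k ℓ : ℕ) (ε : ℝ)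
    (hk : 3 ≤ k) (hε0 : 0 < ε) (hε : ε < 1 / 4)
    (P : Fin ℓ → Finset V) (X : Fin ℓ → Fin (k - 1) → Finset V) (T : Fin ℓ → Finset V)
    (hdens : ∀ i j, i ≠ j → ((k : ℝ) - 2) / ((k : ℝ) - 1) ≤ density G (P i) (P j))
    (hXsub : ∀ i s, X i s ⊆ P i)
    (hdisj : ∀ i, ∀ s t, s ≠ t → Disjoint (X i s) (X i t))
    (hcover : ∀ i, ∀ v ∈ P i, v ∈ T i ∨ ∃ s, v ∈ X i s)
    (hmono : ∀ i, ∀ s t : Fin (k - 1), s ≤ t → (X i t).card ≤ (X i s).card)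
    (hT : ∀ i, ((T i).card : ℝ) ≤ ε * (P i).card)
    (hind : ∀ s : Fin (k - 1), ∀ i j, ∀ a ∈ X i s, ∀ b ∈ X j s, ¬ G.Adj a b) :
    (∀ s : Fin (k - 1), ∀ i j : Fin ℓ,
        (1 / ((k : ℝ) - 1) + Real.sqrt ε) * (P i).card < ((X i s).card : ℝ) →
        (1 / ((k : ℝ) - 1) + Real.sqrt ε) * (P j).card < ((X j s).card : ℝ) → i = j) ∧
      ∃ I₀ : Finset (Fin ℓ), I₀.card ≤ k - 1 ∧
        ∀ i ∉ I₀, ∀ s : Fin (k - 1),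
          (1 / ((k : ℝ) - 1) - k * Real.sqrt ε) * (P i).card ≤ ((X i s).card : ℝ) ∧
          ((X i s).card : ℝ) ≤ (1 / ((k : ℝ) - 1) + k * Real.sqrt ε) * (P i).card := by
  have hcard : (Fintype.card (Fin (k - 1)) : ℝ) = k - 1 := by
    rw [Fintype.card_fin, Nat.cast_sub (by omega), Nat.cast_one]
  have hk1 : (2 : ℝ) ≤ k - 1 := by rw [← hcard]; exact_mod_cast (by simp; omega)
  set δ := √ε
  have hδ0 : 0 ≤ δ := Real.sqrt_nonneg ε
  have hδsq : δ ^ 2 = ε := Real.sq_sqrt hε0.le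
  have hδ1 : δ ≤ 1 := by nlinarith
  have hsum_le (i) : ∑ t, (#(X i t) : ℝ) ≤ #(P i) := by
    exact_mod_cast sum_card_le_card_of_pairwise_disjoint (fun s t => hdisj i s t) (hXsub i)
  have hsum_ge (i) : (1 - δ ^ 2) * #(P i) ≤ ∑ t, (#(X i t) : ℝ) := by
    have : (#(P i) : ℝ) ≤ #(T i) + ∑ t, (#(X i t) : ℝ) := by
      exact_mod_cast card_le_card_add_sum_card (hcover i)
    rw [hδsq]
    linarith [hT i]
  have hcross (i j) (hij : i ≠ j) :
      ((k : ℝ) - 1) * ∑ t, (#(X i t) : ℝ) * #(X j t) ≤ #(P i) * #(P j) := by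
    have := sum_card_mul_card_le_of_le_density (hXsub i) (hXsub j) (fun s t => hdisj i s t)
      (fun t => hind t i j) (hdens i j hij)
    rw [show 1 - ((k : ℝ) - 2) / (k - 1) = 1 / (k - 1) by field_simp; ring] at this
    rwa [← le_div_iff₀' (by linarith), div_eq_mul_one_div, mul_comm]
  have hunique (s : Fin (k - 1)) (i j : Fin ℓ)
      (hi : (1 / ((k : ℝ) - 1) + δ) * #(P i) < #(X i s))
      (hj : (1 / ((k : ℝ) - 1) + δ) * #(P j) < #(X j s)) : i = j := by
    by_contra hij
    have hanti (i) : Antitone fun t => (#(X i t) : ℝ) := fun s t hst =>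
      Nat.cast_le.2 (hmono i s t hst)
    have := ((hanti i).monovary (hanti j)).mul_lt_card_mul_sum_mul (by simp; omega) hδ0
      (by nlinarith) (by positivity) (by positivity) (hsum_le i) (hsum_le j) (hsum_ge i)
      (hsum_ge j) (s := s) (by rwa [hcard]) (by rwa [hcard])
    rw [hcard] at this
    linarith [hcross i j hij]
  refine ⟨hunique, ?_⟩
  obtain ⟨I₀, hI₀card, hI₀⟩ := exists_finset_card_le_of_forall_subsingleton _
    fun s i hi j hj => hunique s i j hi hj
  refine ⟨I₀, by simpa using hI₀card, fun i hi s => ?_⟩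
  have hsmall (t) : (#(X i t) : ℝ) ≤ (1 / ((k : ℝ) - 1) + δ) * #(P i) :=
    not_lt.1 (hI₀ i hi t)
  have hlow := sub_mul_le_of_le_sum_of_forall_le (hsum_ge i) hsmall s
  rw [hcard] at hlow
  have hP : (0 : ℝ) ≤ #(P i) := by positivity
  have hinv : ((k : ℝ) - 1) * (1 / ((k : ℝ) - 1)) = 1 := by field_simp
  constructor
  · nlinarith [mul_nonneg hδ0 (by linarith : (0 : ℝ) ≤ 1 - δ), mul_nonneg hP hδ0]
  · exact (hsmall s).trans (by gcongr; exact le_mul_of_one_le_left hδ0 (by linarith))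

theorem balanced_classes {V : Type*} [Fintype V] (G : SimpleGraph V) (k ℓ : ℕ) (ε : ℝ)
    (hk : 3 ≤ k) (hℓ : 2 ≤ ℓ) (hε0 : 0 < ε) (hε : ε < 1 / 4)
    (P : Fin ℓ → Finset V) (X : Fin ℓ → Fin (k - 1) → Finset V) (T : Fin ℓ → Finset V)
    (hpart : IsPartiteOn G P)
    (hdens : ∀ i j, i ≠ j → ((k : ℝ) - 2) / ((k : ℝ) - 1) ≤ density G (P i) (P j))
    (hXsub : ∀ i s, X i s ⊆ P i) (hTsub : ∀ i, T i ⊆ P i)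
    (hdisj : ∀ i, ∀ s t, s ≠ t → Disjoint (X i s) (X i t))
    (hTdisj : ∀ i s, Disjoint (X i s) (T i))
    (hcover : ∀ i, ∀ v ∈ P i, v ∈ T i ∨ ∃ s, v ∈ X i s)
    (hmono : ∀ i, ∀ s t : Fin (k - 1), s ≤ t → (X i t).card ≤ (X i s).card)
    (hT : ∀ i, ((T i).card : ℝ) ≤ ε * (P i).card)
    (hind : ∀ s : Fin (k - 1), ∀ i j, ∀ a ∈ X i s, ∀ b ∈ X j s, ¬ G.Adj a b) :
    (∀ s : Fin (k - 1), ∀ i j : Fin ℓ,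
        (1 / ((k : ℝ) - 1) + Real.sqrt ε) * (P i).card < ((X i s).card : ℝ) →
        (1 / ((k : ℝ) - 1) + Real.sqrt ε) * (P j).card < ((X j s).card : ℝ) → i = j) ∧
      ∃ I₀ : Finset (Fin ℓ), I₀.card ≤ k - 1 ∧
        ∀ i ∉ I₀, ∀ s : Fin (k - 1),
          (1 / ((k : ℝ) - 1) - k * Real.sqrt ε) * (P i).card ≤ ((X i s).card : ℝ) ∧
          ((X i s).card : ℝ) ≤ (1 / ((k : ℝ) - 1) + k * Real.sqrt ε) * (P i).card :=
  balanced_classes_general G k ℓ ε hk hε0 hε P X T hdens hXsub hdisj hcover hmono hT hind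
end

section
/- For every integer $\ell\ge 3$: every $\ell$-partite graph $G=(V_1\cup\cdots\cup V_\ell,E)$ with $d(V_i,V_j) > \frac{1}{(\ell-1)^2}$ for all $i\ne j$ contains a path with two edges $K_{1,2}$ (a vertex with two neighbours). Consequently $d_\ell(K_{1,2}) \le \frac{1}{(\ell-1)^2}$. -/
/-!
If no vertex has two neighbours, each vertex of `P i` sends at most one edge to the other
parts, so `∑_{j ≠ i} e(P i, P j) ≤ |P i|`. Positive density gives an edge between any two
parts, hence `|P j| ≥ ℓ - 1` for every `j`. Then
`|P i| ≥ ∑_{j ≠ i} e(P i, P j) > |P i| ∑_{j ≠ i} |P j| / (ℓ - 1)² ≥ |P i|`.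
-/

open Finset

namespace SimpleGraph

variable {V : Type*} (G : SimpleGraph V)

theorem eBetween_eq_card_filter [DecidableRel G.Adj] (A B : Finset V) :
    eBetween G A B = #{p ∈ A ×ˢ B | G.Adj p.1 p.2} := by
  rw [eBetween, ← Nat.card_eq_finsetCard]
  exact Nat.card_congr (Equiv.subtypeEquivRight fun p => by simp [and_assoc])

theorem mul_card_mul_card_lt_eBetween {A B : Finset V} {c : ℝ} (hc : 0 ≤ c)
    (h : c < density G A B) : c * #A * #B < eBetween G A B := by
  have hAB : (0 : ℝ) < #A * #B := by
    by_contra! h0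
    have : density G A B = 0 := by
      rw [density, le_antisymm h0 (by positivity), div_zero]
    linarith
  rwa [density, lt_div_iff₀ hAB, ← mul_assoc] at h

theorem sum_eBetween_le_card (hG : ∀ v, (G.neighborSet v).Subsingleton) {ι : Type*}
    {s : Finset ι} {B : ι → Finset V} (hB : (s : Set ι).PairwiseDisjoint B) (A : Finset V) :
    ∑ j ∈ s, eBetween G A (B j) ≤ #A := by
  classical
  simp only [eBetween_eq_card_filter]
  rw [← card_biUnion]
  · refine card_le_card_of_injOn Prod.fst (fun p hp => ?_) fun p hp q hq hpq => ?_
    · simp only [coe_biUnion, Set.mem_iUnion, mem_coe, mem_filter, mem_product] at hp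
      obtain ⟨_, _, ⟨hpA, _⟩, _⟩ := hp
      exact hpA
    · simp only [coe_biUnion, Set.mem_iUnion, mem_coe, mem_filter, mem_product] at hp hq
      obtain ⟨_, _, _, hp⟩ := hp
      obtain ⟨_, _, _, hq⟩ := hq
      rw [hpq] at hp
      exact Prod.ext hpq (hG q.1 hp hq)
  · intro j hj j' hj' hjj'
    rw [Function.onFun, Finset.disjoint_left]
    intro p hp hp'
    simp only [mem_filter, mem_product] at hp hp'
    exact Finset.disjoint_left.1 (hB hj hj' hjj') hp.1.2 hp'.1.2

section Multipartite

variable {G} {ι : Type*} [Fintype ι] [DecidableEq ι] {P : ι → Finset V}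
  (hG : ∀ v, (G.neighborSet v).Subsingleton) (hP : Pairwise fun i j => Disjoint (P i) (P j))
include hG hP

theorem sum_eBetween_erase_le_card (i : ι) :
    ∑ j ∈ univ.erase i, eBetween G (P i) (P j) ≤ #(P i) :=
  sum_eBetween_le_card G hG (hP.set_pairwise _) _

theorem card_le_card_add_one_of_density_pos
    (hpos : ∀ i j, i ≠ j → 0 < density G (P i) (P j)) (i : ι) :
    Fintype.card ι ≤ #(P i) + 1 := calc
  Fintype.card ι = ∑ _j ∈ univ.erase i, 1 + 1 := by
    rw [← card_eq_sum_ones, card_erase_add_one (mem_univ i), card_univ]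
  _ ≤ ∑ j ∈ univ.erase i, eBetween G (P i) (P j) + 1 := by
    gcongr with j hj
    exact Nat.succ_le_of_lt <| by
      simpa using mul_card_mul_card_lt_eBetween G le_rfl (hpos i j (ne_of_mem_erase hj).symm)
  _ ≤ #(P i) + 1 := by grw [sum_eBetween_erase_le_card hG hP i]

theorem mul_card_mul_sum_card_lt_card {c : ℝ} (hc : 0 ≤ c) {i : ι} (hi : (univ.erase i).Nonempty)
    (hdens : ∀ j, j ≠ i → c < density G (P i) (P j)) :
    c * #(P i) * ∑ j ∈ univ.erase i, (#(P j) : ℝ) < #(P i) := calc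
  c * #(P i) * ∑ j ∈ univ.erase i, (#(P j) : ℝ) = ∑ j ∈ univ.erase i, c * #(P i) * #(P j) := by
    rw [mul_sum]
  _ < ∑ j ∈ univ.erase i, (eBetween G (P i) (P j) : ℝ) := sum_lt_sum_of_nonempty hi fun j hj =>
    mul_card_mul_card_lt_eBetween G hc (hdens j (ne_of_mem_erase hj))
  _ ≤ #(P i) := by exact_mod_cast sum_eBetween_erase_le_card hG hP i

theorem exists_density_le_one_div_card_sub_one_sq (hι : 2 ≤ Fintype.card ι) :
    ∃ i j, i ≠ j ∧ density G (P i) (P j) ≤ 1 / ((Fintype.card ι : ℝ) - 1) ^ 2 := by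
  by_contra! hdens
  set m : ℝ := Fintype.card ι - 1 with hm
  have hm_pos : 0 < m := by
    have : (2 : ℝ) ≤ Fintype.card ι := by exact_mod_cast hι
    linarith
  have hc : 0 < 1 / m ^ 2 := by positivity
  have hsize (j : ι) : m ≤ #(P j) := by
    have := card_le_card_add_one_of_density_pos hG hP (fun i j hij => hc.trans (hdens i j hij)) j
    linarith [(by exact_mod_cast this : (Fintype.card ι : ℝ) ≤ #(P j) + 1)]
  obtain ⟨i, j, hij⟩ := Fintype.exists_pair_of_one_lt_card hι
  have hi : (univ.erase i).Nonempty := ⟨j, mem_erase.2 ⟨hij.symm, mem_univ j⟩⟩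
  have hsmall := mul_card_mul_sum_card_lt_card hG hP hc.le hi fun j hj => hdens i j hj.symm
  have hlarge : m ^ 2 ≤ ∑ j ∈ univ.erase i, (#(P j) : ℝ) := calc
    m ^ 2 = ∑ _j ∈ univ.erase i, m := by
      rw [sum_const, nsmul_eq_mul, card_erase_of_mem (mem_univ i), card_univ,
        Nat.cast_sub (by omega), Nat.cast_one, sq]
    _ ≤ ∑ j ∈ univ.erase i, (#(P j) : ℝ) := sum_le_sum fun j _ => hsize j
  have : (#(P i) : ℝ) ≤ 1 / m ^ 2 * #(P i) * ∑ j ∈ univ.erase i, (#(P j) : ℝ) := calc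
    (#(P i) : ℝ) = 1 / m ^ 2 * #(P i) * m ^ 2 := by field_simp
    _ ≤ _ := by gcongr
  linarith

end Multipartite

end SimpleGraph

open SimpleGraph

theorem star_in_dense_multipartite_general {V : Type*} (G : SimpleGraph V)
    (ℓ : ℕ) (hℓ : 3 ≤ ℓ) (P : Fin ℓ → Finset V) (hpart : IsPartiteOn G P)
    (hdens : ∀ i j, i ≠ j → 1 / ((ℓ : ℝ) - 1) ^ 2 < density G (P i) (P j)) :
    ∃ v a b : V, a ≠ b ∧ G.Adj v a ∧ G.Adj v b := by
  by_contra! hcon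
  have hG : ∀ v, (G.neighborSet v).Subsingleton := fun v a ha b hb =>
    not_not.1 fun hab => hcon v a b hab ha hb
  obtain ⟨i, j, hij, hle⟩ :=
    exists_density_le_one_div_card_sub_one_sq hG hpart.2.1 (by rw [Fintype.card_fin]; omega)
  rw [Fintype.card_fin] at hle
  exact (hdens i j hij).not_ge hle

theorem star_in_dense_multipartite {V : Type*} [Fintype V] (G : SimpleGraph V)
    (ℓ : ℕ) (hℓ : 3 ≤ ℓ) (P : Fin ℓ → Finset V) (hpart : IsPartiteOn G P)
    (hdens : ∀ i j, i ≠ j → 1 / ((ℓ : ℝ) - 1) ^ 2 < density G (P i) (P j)) :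
    ∃ v a b : V, a ≠ b ∧ G.Adj v a ∧ G.Adj v b :=
  star_in_dense_multipartite_general G ℓ hℓ P hpart hdens
end

section
/- Let $G$ be a graph in which every vertex has degree at most $1$ (i.e., $G$ is $K_{1,2}$-free, a disjoint union of edges and isolated vertices) that is $\ell$-partite with parts $V_1,\ldots,V_\ell$ ($\ell\ge 3$) and in which there is at least one edge between any two distinct parts. Then there exist indices $i\ne j$ with $d(V_i,V_j) \le \frac{1}{(\ell-1)^2}$. -/
open Finset

theorem matching_low_density {V : Type*} [Fintype V] (G : SimpleGraph V)
    (ℓ : ℕ) (hℓ : 3 ≤ ℓ)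
    (hmatch : ∀ v a b : V, G.Adj v a → G.Adj v b → a = b)
    (P : Fin ℓ → Finset V) (hpart : IsPartiteOn G P)
    (hedge : ∀ i j, i ≠ j → ∃ a ∈ P i, ∃ b ∈ P j, G.Adj a b) :
    ∃ i j : Fin ℓ, i ≠ j ∧ density G (P i) (P j) ≤ 1 / ((ℓ : ℝ) - 1) ^ 2 := by
  classical
  obtain ⟨hne, hdisj, hcover, hindep⟩ := hpart
  set E : Fin ℓ → Fin ℓ → Finset (V × V) :=
    fun i j => ((P i) ×ˢ (P j)).filter (fun p => G.Adj p.1 p.2) with hE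
  have heB : ∀ i j, eBetween G (P i) (P j) = (E i j).card := by
    intro i j
    rw [eBetween, Nat.card_eq_fintype_card, Fintype.card_subtype]
    congr 1
    ext p
    simp [hE, Finset.mem_product, and_assoc]
  -- every part has at least ℓ - 1 vertices
  have hsize : ∀ j : Fin ℓ, ℓ - 1 ≤ (P j).card := by
    intro j
    choose a ha b hb hab using fun k (h : j ≠ k) => hedge j k h
    have hc : ((Finset.univ : Finset (Fin ℓ)).erase j).card ≤ (P j).card := by
      apply Finset.card_le_card_of_injOn
        (fun k => if h : j = k then (hne j).choose else a k h)
      · intro k hk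
        have hjk : j ≠ k := fun h => (Finset.mem_erase.mp hk).1 h.symm
        simp only [dif_neg hjk]
        exact ha k hjk
      · intro k hk k' hk' hkk'
        have hjk : j ≠ k := fun h => (Finset.mem_erase.mp hk).1 h.symm
        have hjk' : j ≠ k' := fun h => (Finset.mem_erase.mp hk').1 h.symm
        simp only [dif_neg hjk, dif_neg hjk'] at hkk'
        by_contra hne'
        have hbb : b k hjk = b k' hjk' := by
          apply hmatch (a k hjk) _ _ (hab k hjk)
          rw [hkk']; exact hab k' hjk'
        have := hdisj k k' hne'
        exact (Finset.disjoint_left.mp this (hb k hjk)) (hbb ▸ hb k' hjk')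
    simpa using hc
  -- fix i = 0
  have hℓpos : 0 < ℓ := by omega
  set i : Fin ℓ := ⟨0, hℓpos⟩ with hi
  set s : Finset (Fin ℓ) := (Finset.univ : Finset (Fin ℓ)).erase i with hs
  have hscard : s.card = ℓ - 1 := by
    simp [hs, Finset.card_erase_of_mem]
  -- the E i j (j ∈ s) are pairwise disjoint
  have hEdisj : ∀ j ∈ s, ∀ j' ∈ s, j ≠ j' → Disjoint (E i j) (E i j') := by
    intro j _ j' _ hjj'
    rw [Finset.disjoint_left]
    intro p hp hp'
    simp only [hE, Finset.mem_filter, Finset.mem_product] at hp hp'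
    exact (Finset.disjoint_left.mp (hdisj j j' hjj') hp.1.2) hp'.1.2
  -- the sum of e(i,j) is at most |P i|
  have hsum : ∑ j ∈ s, (E i j).card ≤ (P i).card := by
    rw [← Finset.card_biUnion hEdisj]
    apply Finset.card_le_card_of_injOn (fun p => p.1)
    · intro p hp
      obtain ⟨j, _, hpj⟩ := Finset.mem_biUnion.mp hp
      simp only [hE, Finset.mem_filter, Finset.mem_product] at hpj
      exact hpj.1.1
    · intro p hp q hq hpq
      obtain ⟨j, _, hpj⟩ := Finset.mem_biUnion.mp hp
      obtain ⟨j', _, hqj⟩ := Finset.mem_biUnion.mp hq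
      simp only [hE, Finset.mem_filter, Finset.mem_product] at hpj hqj
      have hpq' : p.1 = q.1 := hpq
      have : p.2 = q.2 := hmatch q.1 p.2 q.2 (hpq' ▸ hpj.2) hqj.2
      exact Prod.ext hpq this
  -- pick j₀ minimizing e(i, ·)
  have hsne : s.Nonempty := by
    rw [← Finset.card_pos, hscard]; omega
  obtain ⟨j₀, hj₀s, hj₀min⟩ := Finset.exists_min_image s (fun j => (E i j).card) hsne
  have hkey : (ℓ - 1) * (E i j₀).card ≤ (P i).card := by
    calc (ℓ - 1) * (E i j₀).card = ∑ _j ∈ s, (E i j₀).card := by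
          rw [Finset.sum_const, hscard, smul_eq_mul]
      _ ≤ ∑ j ∈ s, (E i j).card := Finset.sum_le_sum hj₀min
      _ ≤ (P i).card := hsum
  -- the key natural-number inequality
  have hnat : (ℓ - 1) ^ 2 * (E i j₀).card ≤ (P i).card * (P j₀).card := by
    calc (ℓ - 1) ^ 2 * (E i j₀).card = (ℓ - 1) * ((ℓ - 1) * (E i j₀).card) := by ring
      _ ≤ (ℓ - 1) * (P i).card := Nat.mul_le_mul_left _ hkey
      _ ≤ (P j₀).card * (P i).card := Nat.mul_le_mul_right _ (hsize j₀)
      _ = (P i).card * (P j₀).card := Nat.mul_comm _ _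
  refine ⟨i, j₀, fun h => (Finset.mem_erase.mp hj₀s).1 h.symm, ?_⟩
  rw [density, heB]
  have hl1 : ((ℓ : ℝ) - 1) = ((ℓ - 1 : ℕ) : ℝ) := by
    rw [Nat.cast_sub (by omega)]; simp
  have hPi : (0 : ℝ) < (P i).card := by exact_mod_cast (hne i).card_pos
  have hPj : (0 : ℝ) < (P j₀).card := by exact_mod_cast (hne j₀).card_pos
  have hl1pos : (0 : ℝ) < ((ℓ - 1 : ℕ) : ℝ) ^ 2 := by
    have : 0 < ℓ - 1 := by omega
    positivity
  rw [hl1, div_le_div_iff₀ (by positivity) hl1pos]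
  calc ((E i j₀).card : ℝ) * ((ℓ - 1 : ℕ) : ℝ) ^ 2
      = (((ℓ - 1) ^ 2 * (E i j₀).card : ℕ) : ℝ) := by push_cast; ring
    _ ≤ (((P i).card * (P j₀).card : ℕ) : ℝ) := by exact_mod_cast hnat
    _ = 1 * (((P i).card : ℝ) * ((P j₀).card : ℝ)) := by push_cast; ring
end

section
/- Let $r\ge 1$ and $q\ge 2$ be integers and $d\in(0,1)$. Set $D = q d^{-r}$ and $\rho = e^{-q} d^{rq}$. Let $G$ be an $(r+1)$-colourable graph with colour classes $U, W_{(1)},\ldots,W_{(r)}$ such that $|U|\ge D$ and $\deg(u,W_{(s)}) \ge d|W_{(s)}|$ for every $u\in U$ and every $s\le r$. Then there exists a $q$-element subset $A\subseteq U$ with $|N(A)\cap W_{(s)}| \ge \rho |W_{(s)}|$ for every $s\le r$. -/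
open Finset

/-!
Count pairs `(A, f)` with `A` a `q`-subset of `U` and `f ∈ ∏ₛ W₍ₛ₎` a transversal all of whose
vertices are adjacent to all of `A`: grouping by `A` gives `∑_A ∏ₛ |N(A) ∩ W₍ₛ₎|`, grouping by `f`
gives `∑_f C(m(f), q)` where `m(f)` is the number of common neighbours of `f` in `U`. The degree
condition makes the average of `m(f)` at least `dʳ|U| ≥ q`, so Jensen's inequality for binomial
coefficients bounds the count below by `∏ₛ |W₍ₛ₎| · (dʳ|U|/q)^q`. As there are at most `|U|^q/q!`
sets `A` and `q^q ≤ e^q q!`, some `A` has `∏ₛ |N(A) ∩ W₍ₛ₎| ≥ e^{-q} d^{rq} ∏ₛ |W₍ₛ₎|`, and since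
every factor is at most `|W₍ₛ₎|`, each one is at least `e^{-q} d^{rq} |W₍ₛ₎|`.
Empty classes are discarded first; this only decreases `r`.
-/

open scoped Nat

theorem Real.exp_neg_mul_pow_self_le_factorial (n : ℕ) : Real.exp (-n) * (n : ℝ) ^ n ≤ n ! := by
  have h := Real.pow_div_factorial_le_exp _ n.cast_nonneg n
  rw [div_le_iff₀ (by positivity)] at h
  rw [Real.exp_neg, inv_mul_le_iff₀ (Real.exp_pos _)]
  exact h

theorem pow_div_le_descPochhammer_eval_div_factorial {q : ℕ} {x : ℝ} (hx : (q : ℝ) ≤ x) :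
    (x / q) ^ q ≤ (descPochhammer ℝ q).eval x / q ! := by
  have hfact : (q ! : ℝ) = ∏ i ∈ range q, ((q : ℝ) - i) := by
    rw [← descPochhammer_eval_eq_prod_range, descPochhammer_eval_eq_descFactorial,
      Nat.descFactorial_self]
  rw [hfact, descPochhammer_eval_eq_prod_range, ← prod_div_distrib, ← card_range q,
    ← prod_const, card_range]
  have hx0 : 0 ≤ x := (Nat.cast_nonneg q).trans hx
  refine prod_le_prod (fun i _ => by positivity) fun i hi => ?_
  have hiq : (i : ℝ) < q := by exact_mod_cast mem_range.1 hi
  rw [div_le_div_iff₀ (by linarith) (by linarith)]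
  nlinarith

theorem card_mul_div_pow_le_sum_choose {κ : Type*} (t : Finset κ) (p : κ → ℕ) {q : ℕ}
    (hq : q ≠ 0) {y : ℝ} (hqy : (q : ℝ) ≤ y) (hy : #t * y ≤ ∑ i ∈ t, (p i : ℝ)) :
    #t * (y / q) ^ q ≤ ∑ i ∈ t, ((p i).choose q : ℝ) := by
  rcases t.eq_empty_or_nonempty with rfl | ht
  · simp
  have hcard : (0 : ℝ) < #t := by exact_mod_cast ht.card_pos
  set x := (#t : ℝ)⁻¹ * ∑ i ∈ t, (p i : ℝ)
  have hyx : y ≤ x := by rw [le_inv_mul_iff₀ hcard]; exact hy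
  have hweights : ∑ _i ∈ t, (#t : ℝ)⁻¹ = 1 := by
    rw [sum_const, nsmul_eq_mul, mul_inv_cancel₀ hcard.ne']
  have hjensen := descPochhammer_eval_div_factorial_le_sum_choose hq p (fun _ => (#t : ℝ)⁻¹)
    (fun _ _ => by positivity) hweights (by simp only [← mul_sum]; linarith)
  simp only [← mul_sum] at hjensen
  rw [le_inv_mul_iff₀ hcard] at hjensen
  have hq0 : (0 : ℝ) ≤ q := q.cast_nonneg
  have hy0 : 0 ≤ y / q := div_nonneg (hq0.trans hqy) hq0
  calc #t * (y / q) ^ q ≤ #t * (x / q) ^ q := by gcongr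
    _ ≤ #t * ((descPochhammer ℝ q).eval x / q !) := by
      gcongr; exact pow_div_le_descPochhammer_eval_div_factorial (hqy.trans hyx)
    _ ≤ _ := hjensen

namespace Finset

variable {ι β : Type*}

theorem card_filter_piFinset_forall [DecidableEq ι] [Fintype ι] (W : ι → Finset β)
    (p : ι → β → Prop) [∀ i, DecidablePred (p i)] :
    #{f ∈ Fintype.piFinset W | ∀ i, p i (f i)} = ∏ i, #{b ∈ W i | p i b} := by
  rw [← Fintype.card_piFinset]
  congr 1
  ext f
  simp [forall_and]

theorem filter_powersetCard_forall_mem (s : Finset β) (n : ℕ) (p : β → Prop) [DecidablePred p] :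
    {t ∈ s.powersetCard n | ∀ b ∈ t, p b} = {b ∈ s | p b}.powersetCard n := by
  ext t
  simp only [mem_filter, mem_powersetCard, subset_iff]
  grind

theorem mul_le_of_mul_prod_le_prod {s : Finset ι} {a b : ι → ℝ} {c : ℝ}
    (ha : ∀ i ∈ s, 0 ≤ a i) (hab : ∀ i ∈ s, a i ≤ b i) (hb : ∀ i ∈ s, 0 < b i)
    (h : c * ∏ i ∈ s, b i ≤ ∏ i ∈ s, a i) {j : ι} (hj : j ∈ s) : c * b j ≤ a j := by
  classical
  rw [← mul_prod_erase s b hj, ← mul_prod_erase s a hj] at h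
  have hrest : ∏ i ∈ s.erase j, a i ≤ ∏ i ∈ s.erase j, b i :=
    prod_le_prod (fun i hi => ha i (mem_of_mem_erase hi)) fun i hi => hab i (mem_of_mem_erase hi)
  have hpos : 0 < ∏ i ∈ s.erase j, b i := prod_pos fun i hi => hb i (mem_of_mem_erase hi)
  refine le_of_mul_le_mul_right ?_ hpos
  calc c * b j * ∏ i ∈ s.erase j, b i ≤ a j * ∏ i ∈ s.erase j, a i := by rw [mul_assoc]; exact h
    _ ≤ a j * ∏ i ∈ s.erase j, b i := mul_le_mul_of_nonneg_left hrest (ha j hj)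

theorem natCard_subtype_mem_and_eq_card_filter (s : Finset β) (p : β → Prop)
    [DecidablePred p] : Nat.card {x // x ∈ s ∧ p x} = #{x ∈ s | p x} := by
  rw [← Nat.card_eq_finsetCard]
  exact Nat.card_congr (Equiv.subtypeEquivRight fun x => by simp)

theorem card_powersetCard_mul_le (s : Finset β) (q : ℕ) {c : ℝ} (hc : 0 ≤ c) :
    #(s.powersetCard q) * (Real.exp (-q) * c ^ q) ≤ (c * #s / q) ^ q := by
  calc #(s.powersetCard q) * (Real.exp (-q) * c ^ q)
      ≤ (#s : ℝ) ^ q / q ! * (Real.exp (-q) * c ^ q) := by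
        rw [card_powersetCard]
        gcongr
        exact Nat.choose_le_pow_div q #s
    _ = Real.exp (-q) * (q : ℝ) ^ q / q ! * (c * #s / q) ^ q := by
        rw [div_pow, mul_pow]
        field_simp
    _ ≤ (c * #s / q) ^ q :=
        mul_le_of_le_one_left (by positivity)
          (div_le_one_of_le₀ (Real.exp_neg_mul_pow_self_le_factorial q) (by positivity))

end Finset

section CommonNeighbourhood

variable {α β ι : Type*} [Fintype ι] [DecidableEq ι]
  (R : α → β → Prop) [∀ a b, Decidable (R a b)] (U : Finset α) (W : ι → Finset β)

theorem sum_prod_card_common_eq_sum_choose (q : ℕ) :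
    ∑ A ∈ U.powersetCard q, ∏ i, #{b ∈ W i | ∀ a ∈ A, R a b} =
      ∑ f ∈ Fintype.piFinset W, (#{a ∈ U | ∀ i, R a (f i)}).choose q := by
  calc ∑ A ∈ U.powersetCard q, ∏ i, #{b ∈ W i | ∀ a ∈ A, R a b}
      = ∑ A ∈ U.powersetCard q, #{f ∈ Fintype.piFinset W | ∀ a ∈ A, ∀ i, R a (f i)} := by
        refine sum_congr rfl fun A _ => ?_
        rw [← card_filter_piFinset_forall]
        simp only [forall_comm (α := ι)]
    _ = ∑ f ∈ Fintype.piFinset W, #{A ∈ U.powersetCard q | ∀ a ∈ A, ∀ i, R a (f i)} :=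
        sum_card_bipartiteAbove_eq_sum_card_bipartiteBelow _
    _ = _ := by simp only [filter_powersetCard_forall_mem, card_powersetCard]

theorem sum_card_common_eq_sum_prod_card :
    ∑ f ∈ Fintype.piFinset W, #{a ∈ U | ∀ i, R a (f i)} =
      ∑ a ∈ U, ∏ i, #{b ∈ W i | R a b} := by
  refine (sum_card_bipartiteAbove_eq_sum_card_bipartiteBelow (s := U) (t := Fintype.piFinset W)
    (fun a (f : ι → β) => ∀ i, R a (f i))).symm.trans ?_
  exact sum_congr rfl fun a _ => card_filter_piFinset_forall W fun _ => R a

theorem pow_card_mul_card_mul_prod_le_sum_card_common {d : ℝ} (hd : 0 ≤ d)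
    (hdeg : ∀ a ∈ U, ∀ i, d * #(W i) ≤ #{b ∈ W i | R a b}) :
    d ^ Fintype.card ι * #U * ∏ i, (#(W i) : ℝ) ≤
      ∑ f ∈ Fintype.piFinset W, (#{a ∈ U | ∀ i, R a (f i)} : ℝ) := by
  rw [← Nat.cast_sum, sum_card_common_eq_sum_prod_card]
  push_cast
  calc d ^ Fintype.card ι * #U * ∏ i, (#(W i) : ℝ) = ∑ _a ∈ U, ∏ i, d * #(W i) := by
        rw [sum_const, nsmul_eq_mul, prod_mul_distrib, prod_const, Finset.card_univ]; ring
    _ ≤ ∑ a ∈ U, ∏ i, (#{b ∈ W i | R a b} : ℝ) :=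
        sum_le_sum fun a ha => prod_le_prod (fun i _ => by positivity) fun i _ => hdeg a ha i

theorem exists_card_eq_forall_mul_le_card_common {q : ℕ} (hq : q ≠ 0) {d : ℝ} (hd : 0 ≤ d)
    (hW : ∀ i, (W i).Nonempty) (hU : (q : ℝ) ≤ d ^ Fintype.card ι * #U)
    (hdeg : ∀ a ∈ U, ∀ i, d * #(W i) ≤ #{b ∈ W i | R a b}) :
    ∃ A ⊆ U, #A = q ∧ ∀ i,
      Real.exp (-q) * d ^ (Fintype.card ι * q) * #(W i) ≤ #{b ∈ W i | ∀ a ∈ A, R a b} := by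
  set k := Fintype.card ι
  set M := ∏ i, (#(W i) : ℝ)
  set y := d ^ k * #U
  have hWpos : ∀ i, (0 : ℝ) < #(W i) := fun i => by exact_mod_cast (hW i).card_pos
  have hM : 0 < M := prod_pos fun i _ => hWpos i
  have hq0 : (0 : ℝ) < q := by exact_mod_cast Nat.pos_of_ne_zero hq
  have hjensen :
      M * (y / q) ^ q ≤ ∑ A ∈ U.powersetCard q, ∏ i, (#{b ∈ W i | ∀ a ∈ A, R a b} : ℝ) := by
    have h := card_mul_div_pow_le_sum_choose (Fintype.piFinset W)
      (fun f => #{a ∈ U | ∀ i, R a (f i)}) hq hU (by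
        rw [Fintype.card_piFinset, Nat.cast_prod, mul_comm]
        exact pow_card_mul_card_mul_prod_le_sum_card_common R U W hd hdeg)
    simp only [Fintype.card_piFinset, Nat.cast_prod] at h
    have hcounting : ∑ f ∈ Fintype.piFinset W, ((#{a ∈ U | ∀ i, R a (f i)}).choose q : ℝ) =
        ∑ A ∈ U.powersetCard q, ∏ i, (#{b ∈ W i | ∀ a ∈ A, R a b} : ℝ) := by
      exact_mod_cast (sum_prod_card_common_eq_sum_choose R U W q).symm
    exact h.trans hcounting.le
  have hcount : #(U.powersetCard q) * (Real.exp (-q) * d ^ (k * q) * M) ≤ M * (y / q) ^ q :=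
    calc #(U.powersetCard q) * (Real.exp (-q) * d ^ (k * q) * M)
        = #(U.powersetCard q) * (Real.exp (-q) * (d ^ k) ^ q) * M := by rw [pow_mul]; ring
      _ ≤ (y / q) ^ q * M := by gcongr; exact card_powersetCard_mul_le U q (by positivity)
      _ = M * (y / q) ^ q := mul_comm _ _
  have hP : (U.powersetCard q).Nonempty := by
    refine nonempty_of_sum_ne_zero (lt_of_lt_of_le ?_ hjensen).ne'
    have : 0 < y := hq0.trans_le hU
    positivity
  obtain ⟨A, hA, hAle⟩ := exists_le_of_sum_le hP (f := fun _ => Real.exp (-q) * d ^ (k * q) * M)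
    (g := fun A => ∏ i, (#{b ∈ W i | ∀ a ∈ A, R a b} : ℝ))
    (by rw [sum_const, nsmul_eq_mul]; exact hcount.trans hjensen)
  obtain ⟨hAU, hAcard⟩ := mem_powersetCard.1 hA
  refine ⟨A, hAU, hAcard, fun i => ?_⟩
  exact mul_le_of_mul_prod_le_prod (fun _ _ => by positivity)
    (fun j _ => by exact_mod_cast card_filter_le _ _) (fun j _ => hWpos j) hAle (mem_univ i)

end CommonNeighbourhood

theorem common_neighbourhood_lemma_general {V : Type*} (G : SimpleGraph V)
    (r q : ℕ) (d : ℝ) (hq : 2 ≤ q) (hd0 : 0 < d) (hd1 : d < 1)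
    (U : Finset V) (Wc : Fin r → Finset V)
    (hU : (q : ℝ) / d ^ r ≤ (U.card : ℝ))
    (hdeg : ∀ u ∈ U, ∀ s, d * ((Wc s).card : ℝ) ≤ (degTo G u (Wc s : Set V) : ℝ)) :
    ∃ A : Finset V, A ⊆ U ∧ A.card = q ∧
      ∀ s, Real.exp (-(q : ℝ)) * d ^ (r * q) * ((Wc s).card : ℝ) ≤
        (Nat.card {w : V // w ∈ Wc s ∧ ∀ a ∈ A, G.Adj a w} : ℝ) := by
  classical
  let S := {s : Fin r // (Wc s).Nonempty}
  have hS : Fintype.card S ≤ r := (Fintype.card_subtype_le _).trans_eq (Fintype.card_fin r)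
  have hU' : (q : ℝ) ≤ d ^ Fintype.card S * #U := by
    rw [div_le_iff₀' (by positivity)] at hU
    exact hU.trans <|
      mul_le_mul_of_nonneg_right (pow_le_pow_of_le_one hd0.le hd1.le hS) (Nat.cast_nonneg _)
  have hdeg' : ∀ u ∈ U, ∀ s : S, d * #(Wc s) ≤ #{w ∈ Wc s | G.Adj u w} := fun u hu s =>
    (hdeg u hu s).trans_eq <| by
      rw [degTo]; exact_mod_cast natCard_subtype_mem_and_eq_card_filter _ _
  obtain ⟨A, hAU, hAcard, hA⟩ := exists_card_eq_forall_mul_le_card_common G.Adj U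
    (fun s : S => Wc s) (by omega) hd0.le (fun s => s.2) hU' hdeg'
  refine ⟨A, hAU, hAcard, fun s => ?_⟩
  rw [natCard_subtype_mem_and_eq_card_filter]
  rcases (Wc s).eq_empty_or_nonempty with hs | hs
  · simp [hs]
  calc Real.exp (-q) * d ^ (r * q) * #(Wc s)
      ≤ Real.exp (-q) * d ^ (Fintype.card S * q) * #(Wc s) := by
        gcongr _ * ?_ * _
        exact pow_le_pow_of_le_one hd0.le hd1.le (Nat.mul_le_mul_right q hS)
    _ ≤ _ := hA ⟨s, hs⟩

theorem common_neighbourhood_lemma {V : Type*} [Fintype V] (G : SimpleGraph V)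
    (r q : ℕ) (d : ℝ) (hr : 1 ≤ r) (hq : 2 ≤ q) (hd0 : 0 < d) (hd1 : d < 1)
    (U : Finset V) (Wc : Fin r → Finset V)
    (hUdisj : ∀ s, Disjoint U (Wc s))
    (hWdisj : ∀ s t, s ≠ t → Disjoint (Wc s) (Wc t))
    (hcover : ∀ v : V, v ∈ U ∨ ∃ s, v ∈ Wc s)
    (hUind : ∀ a ∈ U, ∀ b ∈ U, ¬ G.Adj a b)
    (hWind : ∀ s, ∀ a ∈ Wc s, ∀ b ∈ Wc s, ¬ G.Adj a b)
    (hU : (q : ℝ) / d ^ r ≤ (U.card : ℝ))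
    (hdeg : ∀ u ∈ U, ∀ s, d * ((Wc s).card : ℝ) ≤ (degTo G u (Wc s : Set V) : ℝ)) :
    ∃ A : Finset V, A ⊆ U ∧ A.card = q ∧
      ∀ s, Real.exp (-(q : ℝ)) * d ^ (r * q) * ((Wc s).card : ℝ) ≤
        (Nat.card {w : V // w ∈ Wc s ∧ ∀ a ∈ A, G.Adj a w} : ℝ) :=
  common_neighbourhood_lemma_general G r q d hq hd0 hd1 U Wc hU hdeg
end

section
/- Let $r\ge 2$ be an integer and let $G$ be an $r$-colourable graph with colour classes $W_{(1)},\ldots,W_{(r)}$, all of the same size $h$. Suppose that for every $s\le r$ and every vertex $w\in\bigcup_{t\ne s}W_{(t)}$ we have $\deg(w,W_{(s)})\ge (1-\frac{1}{r^2})h$. Then $G$ contains at least $\frac{1}{2}h^r$ copies of the complete graph $K_r$ (i.e., at least $\frac12 h^r$ $r$-tuples $(w_1,\ldots,w_r)$ with $w_s\in W_{(s)}$ forming a clique). -/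
/-!
Union bound over the `r.choose 2` pairs of parts. For fixed parts `s ≠ t`, a transversal tuple
fails to be adjacent on `(s, t)` only if its `s`-coordinate is one of the at most `h / r²`
non-neighbours of its `t`-coordinate, so at most `h ^ r / r²` of the `h ^ r` transversal tuples
fail on `(s, t)`. Summing over pairs, at most `(r.choose 2 / r²) h ^ r ≤ h ^ r / 2` tuples are
not cliques.
-/

open Finset

section PiFinset

variable {ι : Type*} [Fintype ι] [DecidableEq ι] {α : ι → Type*} [∀ i, DecidableEq (α i)]

lemma Fintype.card_filter_piFinset_apply (W : ∀ i, Finset (α i)) (i : ι) (p : α i → Prop)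
    [DecidablePred p] :
    #{f ∈ piFinset W | p (f i)} = #{a ∈ W i | p a} * ∏ j ∈ univ.erase i, #(W j) := by
  have hfilter : {f ∈ piFinset W | p (f i)} = piFinset (Function.update W i {a ∈ W i | p a}) := by
    rw [piFinset_update_eq_filter_piFinset_mem _ _ (filter_subset _ _)]
    exact filter_congr fun f hf => by simp [mem_piFinset.mp hf i]
  rw [hfilter, card_piFinset, ← mul_prod_erase _ _ (mem_univ i), Function.update_self]
  congr 1
  exact Finset.prod_congr rfl fun j hj => by rw [Function.update_of_ne (ne_of_mem_erase hj)]

lemma Fintype.card_filter_piFinset_apply₂ (W : ∀ i, Finset (α i)) {i j : ι} (hij : i ≠ j)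
    (R : α i → α j → Prop) [∀ a b, Decidable (R a b)] :
    #{f ∈ piFinset W | R (f i) (f j)} =
      (∑ b ∈ W j, #{a ∈ W i | R a b}) * ∏ k ∈ (univ.erase i).erase j, #(W k) := by
  rw [card_eq_sum_card_fiberwise (f := fun f => f j) (t := W j)
    fun f hf => mem_piFinset.mp (mem_filter.mp hf).1 j, sum_mul]
  refine Finset.sum_congr rfl fun b hb => ?_
  have hfibre : {f ∈ {f ∈ piFinset W | R (f i) (f j)} | f j = b} =
      {f ∈ piFinset (Function.update W j {b}) | R (f i) b} := by
    rw [piFinset_update_singleton_eq_filter_piFinset_eq _ _ hb, filter_filter, filter_filter]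
    exact filter_congr fun f _ => ⟨fun ⟨h, e⟩ => ⟨e, e ▸ h⟩, fun ⟨e, h⟩ => ⟨e ▸ h, e⟩⟩
  rw [hfibre, card_filter_piFinset_apply _ i (R · b), Function.update_of_ne hij,
    ← mul_prod_erase _ _ (mem_erase.mpr ⟨hij.symm, mem_univ j⟩), Function.update_self,
    card_singleton, one_mul]
  congr 1
  exact Finset.prod_congr rfl fun k hk => by rw [Function.update_of_ne (ne_of_mem_erase hk)]

lemma Fintype.card_filter_piFinset_rel_le {V : Type*} [DecidableEq V] (W : ι → Finset V) {h : ℕ}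
    (hcard : ∀ i, #(W i) = h) {i j : ι} (hij : i ≠ j) (R : V → V → Prop) [DecidableRel R]
    {ε : ℝ} (hR : ∀ b ∈ W j, (#{a ∈ W i | R a b} : ℝ) ≤ ε * h) :
    (#{f ∈ piFinset W | R (f i) (f j)} : ℝ) ≤ ε * h ^ Fintype.card ι := by
  have hn : #((univ.erase i).erase j) + 1 + 1 = Fintype.card ι := by
    rw [card_erase_add_one (mem_erase.mpr ⟨hij.symm, mem_univ j⟩), card_erase_add_one (mem_univ i),
      card_univ]
  calc (#{f ∈ piFinset W | R (f i) (f j)} : ℝ)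
      = (∑ b ∈ W j, (#{a ∈ W i | R a b} : ℝ)) * h ^ #((univ.erase i).erase j) := by
        rw [card_filter_piFinset_apply₂ W hij]
        simp [hcard]
    _ ≤ (∑ _b ∈ W j, ε * h) * h ^ #((univ.erase i).erase j) := by
        gcongr with b hb
        exact hR b hb
    _ = ε * h ^ Fintype.card ι := by rw [sum_const, hcard, nsmul_eq_mul, ← hn]; ring

end PiFinset

lemma Nat.cast_choose_two_div_sq_le (n : ℕ) : (n.choose 2 : ℝ) / n ^ 2 ≤ 1 / 2 :=
  div_le_of_le_mul₀ (by positivity) (by norm_num) (by rw [Nat.cast_choose_two]; nlinarith [n.cast_nonneg (α := ℝ)])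

section Adjacency

variable {V : Type*} (G : SimpleGraph V) [DecidableRel G.Adj]

lemma degTo_coe_finset (v : V) (A : Finset V) : degTo G v A = #{u ∈ A | G.Adj v u} := by
  rw [degTo, ← Nat.card_eq_finsetCard]
  exact Nat.card_congr (Equiv.subtypeEquivRight fun u => by simp)

lemma card_filter_not_adj_add_degTo (v : V) (A : Finset V) :
    #{u ∈ A | ¬ G.Adj u v} + degTo G v A = #A := by
  simp_rw [degTo_coe_finset, G.adj_comm _ v]
  exact (add_comm _ _).trans (card_filter_add_card_filter_not _)

variable {ι : Type*} [Fintype ι]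

lemma nat_card_transversal_cliques [DecidableEq ι] (W : ι → Finset V) :
    Nat.card {f : ι → V // (∀ s, f s ∈ W s) ∧ ∀ s t, s ≠ t → G.Adj (f s) (f t)} =
      #{f ∈ Fintype.piFinset W | ∀ s t, s ≠ t → G.Adj (f s) (f t)} := by
  rw [← Nat.card_eq_finsetCard]
  exact Nat.card_congr (Equiv.subtypeEquivRight fun f => by simp)

variable [DecidableEq V] [LinearOrder ι]

lemma card_filter_not_pairwise_adj_le (T : Finset (ι → V)) :
    #{f ∈ T | ¬ ∀ s t, s ≠ t → G.Adj (f s) (f t)} ≤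
      ∑ p ∈ {p ∈ univ ×ˢ univ | p.1 < p.2}, #{f ∈ T | ¬ G.Adj (f p.1) (f p.2)} := by
  refine (card_le_card fun f hf => ?_).trans card_biUnion_le
  obtain ⟨hfT, hf⟩ := mem_filter.mp hf
  push Not at hf
  obtain ⟨s, t, hst, hadj⟩ := hf
  simp only [mem_biUnion, mem_filter, mem_product, mem_univ, true_and]
  rcases hst.lt_or_gt with hlt | hgt
  · exact ⟨(s, t), hlt, hfT, hadj⟩
  · exact ⟨(t, s), hgt, hfT, fun h => hadj h.symm⟩

lemma card_sub_choose_two_mul_le_card_filter_pairwise_adj (T : Finset (ι → V)) {δ : ℝ}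
    (hδ : ∀ s t, s ≠ t → (#{f ∈ T | ¬ G.Adj (f s) (f t)} : ℝ) ≤ δ) :
    (#T : ℝ) - (Fintype.card ι).choose 2 * δ ≤ #{f ∈ T | ∀ s t, s ≠ t → G.Adj (f s) (f t)} := by
  have hbad : (#{f ∈ T | ¬ ∀ s t, s ≠ t → G.Adj (f s) (f t)} : ℝ) ≤
      (Fintype.card ι).choose 2 * δ :=
    calc (#{f ∈ T | ¬ ∀ s t, s ≠ t → G.Adj (f s) (f t)} : ℝ)
        ≤ ∑ p ∈ {p ∈ univ ×ˢ univ | p.1 < p.2}, (#{f ∈ T | ¬ G.Adj (f p.1) (f p.2)} : ℝ) := by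
          exact_mod_cast card_filter_not_pairwise_adj_le G T
      _ ≤ ∑ _p ∈ {p ∈ univ ×ˢ univ | p.1 < p.2}, δ :=
          sum_le_sum fun p hp => hδ p.1 p.2 (mem_filter.mp hp).2.ne
      _ = (Fintype.card ι).choose 2 * δ := by
          rw [sum_const, nsmul_eq_mul, card_product_filter_lt, card_univ]
  have hsplit : (#{f ∈ T | ∀ s t, s ≠ t → G.Adj (f s) (f t)} : ℝ) +
      #{f ∈ T | ¬ ∀ s t, s ≠ t → G.Adj (f s) (f t)} = #T := by
    exact_mod_cast card_filter_add_card_filter_not _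
  linarith

end Adjacency

theorem many_transversal_cliques_general {V : Type*} [Fintype V] (G : SimpleGraph V)
    (r h : ℕ) (Wc : Fin r → Finset V)
    (hcard : ∀ s, (Wc s).card = h)
    (hdeg : ∀ s t : Fin r, t ≠ s → ∀ v ∈ Wc t,
      (1 - 1 / (r : ℝ) ^ 2) * h ≤ (degTo G v (Wc s : Set V) : ℝ)) :
    (h : ℝ) ^ r / 2 ≤ (Nat.card {f : Fin r → V //
      (∀ s, f s ∈ Wc s) ∧ ∀ s t, s ≠ t → G.Adj (f s) (f t)} : ℝ) := by
  classical
  have hnonadj (s t : Fin r) (hst : s ≠ t) (b : V) (hb : b ∈ Wc t) :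
      (#{a ∈ Wc s | ¬ G.Adj a b} : ℝ) ≤ 1 / r ^ 2 * h := by
    have hsum : (#{a ∈ Wc s | ¬ G.Adj a b} : ℝ) + degTo G b (Wc s) = h := by
      exact_mod_cast (card_filter_not_adj_add_degTo G b (Wc s)).trans (hcard s)
    linarith [hdeg s t hst.symm b hb]
  have hpair (s t : Fin r) (hst : s ≠ t) :
      (#{f ∈ Fintype.piFinset Wc | ¬ G.Adj (f s) (f t)} : ℝ) ≤ 1 / r ^ 2 * h ^ r := by
    simpa using Fintype.card_filter_piFinset_rel_le Wc hcard hst (fun a b => ¬ G.Adj a b)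
      (hnonadj s t hst)
  have hcliques := card_sub_choose_two_mul_le_card_filter_pairwise_adj G _ hpair
  rw [Fintype.card_fin, Fintype.card_piFinset, prod_congr rfl fun s _ => hcard s, prod_const,
    card_univ, Fintype.card_fin] at hcliques
  rw [nat_card_transversal_cliques]
  calc (h : ℝ) ^ r / 2 = h ^ r - 1 / 2 * h ^ r := by ring
    _ ≤ h ^ r - r.choose 2 / r ^ 2 * h ^ r := by gcongr ?_ - ?_ * _; exact Nat.cast_choose_two_div_sq_le r
    _ = h ^ r - r.choose 2 * (1 / r ^ 2 * h ^ r) := by ring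
    _ ≤ _ := by exact_mod_cast hcliques

theorem many_transversal_cliques {V : Type*} [Fintype V] (G : SimpleGraph V)
    (r h : ℕ) (hr : 2 ≤ r) (Wc : Fin r → Finset V)
    (hdisj : ∀ s t, s ≠ t → Disjoint (Wc s) (Wc t))
    (hcover : ∀ v : V, ∃ s, v ∈ Wc s)
    (hind : ∀ s, ∀ a ∈ Wc s, ∀ b ∈ Wc s, ¬ G.Adj a b)
    (hcard : ∀ s, (Wc s).card = h)
    (hdeg : ∀ s t : Fin r, t ≠ s → ∀ v ∈ Wc t,
      (1 - 1 / (r : ℝ) ^ 2) * h ≤ (degTo G v (Wc s : Set V) : ℝ)) :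
    (h : ℝ) ^ r / 2 ≤ (Nat.card {f : Fin r → V //
      (∀ s, f s ∈ Wc s) ∧ ∀ s t, s ≠ t → G.Adj (f s) (f t)} : ℝ) :=
  many_transversal_cliques_general G r h Wc hcard hdeg
end

section
/- Let $r\ge 2$ be an integer and $\alpha\in(0,\frac14)$. Let $B$ be a bipartite graph with parts $U$ and $W$, $|U|=p$, $|W|=q$. If $p \ge 4\lfloor\alpha^r\ln q\rfloor$ and $e(B) \ge \frac{1}{2}pq$, then $B$ contains a complete bipartite subgraph $K(a,b)$ with $a = \lfloor\alpha^r\ln q\rfloor$ vertices in $U$ and $b = \lfloor q^{1-\alpha^{r-1}}\rfloor$ vertices in $W$. -/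
open Finset

/-!
Kővári–Sós–Turán counting. Write `d w` for the number of neighbours of `w ∈ W` in `U`. Counting
pairs `(S, w)` with `S` an `a`-subset of `U` and `w` adjacent to all of `S` gives
`∑_{w ∈ W} C(d w, a)`. The average of `d w` is at least `p / 2` and `a ≤ p / 4`, so the power mean
inequality applied to `d w + 1 - a` bounds this sum below by `q C(p, a) / 4 ^ a`; hence some `S`
has at least `q / 4 ^ a` common neighbours. Finally `4 ^ a ≤ q ^ (α ^ (r - 1))` because
`α ln 4 ≤ 1`, so `q / 4 ^ a ≥ q ^ (1 - α ^ (r - 1))`.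
-/

open scoped Nat

theorem Finset.powersetCard_filter {α : Type*} (s : Finset α) (n : ℕ) (p : α → Prop)
    [DecidablePred p] :
    {t ∈ s.powersetCard n | ∀ x ∈ t, p x} = {x ∈ s | p x}.powersetCard n := by
  ext t
  simp only [mem_filter, mem_powersetCard, subset_iff]
  grind

theorem card_mul_choose_le_four_pow_mul_sum_choose {ι : Type*} (s : Finset ι) (d : ι → ℕ)
    {p a : ℕ} (hp : 4 * a ≤ p) (hd : p * #s ≤ 2 * ∑ i ∈ s, d i) :
    #s * p.choose a ≤ 4 ^ a * ∑ i ∈ s, (d i).choose a := by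
  obtain _ | n := a
  · simp
  set a := n + 1
  set g : ι → ℕ := fun i => d i + 1 - a
  have hg : p * #s ≤ 4 * ∑ i ∈ s, g i := by
    have hdg : ∑ i ∈ s, d i ≤ ∑ i ∈ s, g i + #s * a := by
      rw [← smul_eq_mul, ← sum_const, ← sum_add_distrib]
      exact sum_le_sum fun i _ => by simp only [g]; omega
    have := Nat.mul_le_mul_right #s hp
    nlinarith
  have hg_pow : ∀ i, g i ^ a ≤ a ! * (d i).choose a := fun i => by
    rw [← Nat.descFactorial_eq_factorial_mul_choose]
    exact Nat.pow_sub_le_descFactorial (d i) a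
  have hp_pow : a ! * p.choose a ≤ p ^ a := by
    rw [← Nat.descFactorial_eq_factorial_mul_choose]
    exact Nat.descFactorial_le_pow p a
  have key : (#s ^ n * a !) * (#s * p.choose a) ≤
      (#s ^ n * a !) * (4 ^ a * ∑ i ∈ s, (d i).choose a) :=
    calc (#s ^ n * a !) * (#s * p.choose a) = #s ^ a * (a ! * p.choose a) := by ring
      _ ≤ #s ^ a * p ^ a := Nat.mul_le_mul_left _ hp_pow
      _ = (p * #s) ^ a := by ring
      _ ≤ (4 * ∑ i ∈ s, g i) ^ a := Nat.pow_le_pow_left hg a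
      _ = 4 ^ a * (∑ i ∈ s, g i) ^ a := by ring
      _ ≤ 4 ^ a * (#s ^ n * ∑ i ∈ s, g i ^ a) :=
        Nat.mul_le_mul_left _ (pow_sum_le_card_mul_sum_pow (fun _ _ => Nat.zero_le _) n)
      _ ≤ 4 ^ a * (#s ^ n * ∑ i ∈ s, a ! * (d i).choose a) :=
        Nat.mul_le_mul_left _ (Nat.mul_le_mul_left _ (sum_le_sum fun i _ => hg_pow i))
      _ = (#s ^ n * a !) * (4 ^ a * ∑ i ∈ s, (d i).choose a) := by rw [← mul_sum]; ring
  rcases s.eq_empty_or_nonempty with rfl | hs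
  · simp
  exact Nat.le_of_mul_le_mul_left key (by positivity)

open Real in
theorem floor_rpow_mul_four_pow_floor_le (q : ℕ) {c x : ℝ} (hc0 : 0 ≤ c)
    (hc : c * log 4 ≤ x) (hx : x < 1) :
    ⌊(q : ℝ) ^ (1 - x)⌋₊ * 4 ^ ⌊c * log q⌋₊ ≤ q := by
  rcases Nat.eq_zero_or_pos q with rfl | hq
  · simp [zero_rpow (sub_ne_zero.2 hx.ne')]
  have hq1 : (1 : ℝ) ≤ q := by exact_mod_cast hq
  have hlog : 0 ≤ log q := log_nonneg hq1
  have h4 : (4 : ℝ) ^ ⌊c * log q⌋₊ ≤ (q : ℝ) ^ x := by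
    rw [le_rpow_iff_log_le (by positivity) (by positivity), log_pow]
    calc (⌊c * log q⌋₊ : ℝ) * log 4 ≤ c * log q * log 4 := by
          gcongr
          exact Nat.floor_le (by positivity)
      _ = c * log 4 * log q := by ring
      _ ≤ x * log q := by gcongr
  have : (⌊(q : ℝ) ^ (1 - x)⌋₊ : ℝ) * 4 ^ ⌊c * log q⌋₊ ≤ q :=
    calc (⌊(q : ℝ) ^ (1 - x)⌋₊ : ℝ) * 4 ^ ⌊c * log q⌋₊ ≤ (q : ℝ) ^ (1 - x) * (q : ℝ) ^ x := by
          gcongr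
          exact Nat.floor_le (by positivity)
      _ = q := by rw [← rpow_add' (Nat.cast_nonneg q) (by norm_num), sub_add_cancel, rpow_one]
  exact_mod_cast this

namespace SimpleGraph

variable {V : Type*} (G : SimpleGraph V)

theorem eBetween_eq_sum_card_filter [DecidableRel G.Adj] (A B : Finset V) :
    eBetween G A B = ∑ w ∈ B, #{u ∈ A | G.Adj u w} := by
  have hcard : eBetween G A B = #{p ∈ A ×ˢ B | G.Adj p.1 p.2} := by
    rw [eBetween, ← Nat.card_eq_finsetCard]
    exact Nat.card_congr (Equiv.subtypeEquivRight fun p => by simp [and_assoc])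
  rw [hcard, card_filter, sum_product_right]
  simp only [card_filter]

theorem sum_card_commonNbhd_eq_sum_choose [DecidableRel G.Adj] (U W : Finset V) (a : ℕ) :
    ∑ S ∈ U.powersetCard a, #{w ∈ W | ∀ u ∈ S, G.Adj u w} =
      ∑ w ∈ W, (#{u ∈ U | G.Adj u w}).choose a := by
  have := sum_card_bipartiteAbove_eq_sum_card_bipartiteBelow
    (fun S w => ∀ u ∈ S, G.Adj u w) (s := U.powersetCard a) (t := W)
  simp only [bipartiteAbove, bipartiteBelow, powersetCard_filter, card_powersetCard] at this
  exact this

theorem exists_complete_between_of_mul_four_pow_le (U W : Finset V) {a b : ℕ}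
    (hp : 4 * a ≤ #U) (he : #U * #W ≤ 2 * eBetween G U W) (hb : b * 4 ^ a ≤ #W) :
    ∃ A ⊆ U, ∃ B ⊆ W, #A = a ∧ #B = b ∧ ∀ u ∈ A, ∀ w ∈ B, G.Adj u w := by
  classical
  have hcount : #W * (#U).choose a ≤ 4 ^ a * ∑ w ∈ W, (#{u ∈ U | G.Adj u w}).choose a :=
    card_mul_choose_le_four_pow_mul_sum_choose W _ hp (by rwa [← eBetween_eq_sum_card_filter])
  have hsum : ∑ _S ∈ U.powersetCard a, b ≤
      ∑ S ∈ U.powersetCard a, #{w ∈ W | ∀ u ∈ S, G.Adj u w} := by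
    rw [sum_const, card_powersetCard, smul_eq_mul, sum_card_commonNbhd_eq_sum_choose]
    refine Nat.le_of_mul_le_mul_left ?_ (by positivity : 0 < 4 ^ a)
    calc 4 ^ a * ((#U).choose a * b) = (b * 4 ^ a) * (#U).choose a := by ring
      _ ≤ #W * (#U).choose a := Nat.mul_le_mul_right _ hb
      _ ≤ _ := hcount
  obtain ⟨A, hA, hbA⟩ := exists_le_of_sum_le (powersetCard_nonempty.2 (by omega)) hsum
  obtain ⟨hAU, hAcard⟩ := mem_powersetCard.1 hA
  obtain ⟨B, hBA, hBcard⟩ := exists_subset_card_eq hbA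
  refine ⟨A, hAU, B, hBA.trans (filter_subset _ _), hAcard, hBcard, fun u hu w hw => ?_⟩
  exact (mem_filter.1 (hBA hw)).2 u hu

end SimpleGraph

theorem complete_bipartite_in_dense_bipartite_general {V : Type*}
    (G : SimpleGraph V) (r : ℕ) (α : ℝ) (hr : 2 ≤ r) (hα0 : 0 < α) (hα : α < 1 / 4)
    (U W : Finset V)
    (hp : 4 * ⌊α ^ r * Real.log W.card⌋₊ ≤ U.card)
    (he : ((U.card : ℝ) * W.card) / 2 ≤ (eBetween G U W : ℝ)) :
    ∃ A B' : Finset V, A ⊆ U ∧ B' ⊆ W ∧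
      A.card = ⌊α ^ r * Real.log W.card⌋₊ ∧
      B'.card = ⌊(W.card : ℝ) ^ ((1 : ℝ) - α ^ (r - 1))⌋₊ ∧
      ∀ a ∈ A, ∀ b ∈ B', G.Adj a b := by
  have hαr : α ^ r = α ^ (r - 1) * α := by rw [← pow_succ, Nat.sub_add_cancel (by omega)]
  have hlog4 : α * Real.log 4 ≤ 1 := by
    have := Real.log_le_sub_one_of_pos (by norm_num : (0 : ℝ) < 4)
    nlinarith [Real.log_nonneg (by norm_num : (1 : ℝ) ≤ 4)]
  have hb := floor_rpow_mul_four_pow_floor_le #W (c := α ^ r) (x := α ^ (r - 1)) (by positivity)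
    (by rw [hαr, mul_assoc]; exact mul_le_of_le_one_right (by positivity) hlog4)
    (pow_lt_one₀ hα0.le (by linarith) (by omega))
  have he' : #U * #W ≤ 2 * eBetween G U W := by
    exact_mod_cast (by linarith : (#U : ℝ) * #W ≤ 2 * eBetween G U W)
  obtain ⟨A, hAU, B, hBW, hA, hB, hAB⟩ :=
    G.exists_complete_between_of_mul_four_pow_le U W hp he' hb
  exact ⟨A, B, hAU, hBW, hA, hB, hAB⟩

theorem complete_bipartite_in_dense_bipartite {V : Type*} [Fintype V]
    (G : SimpleGraph V) (r : ℕ) (α : ℝ) (hr : 2 ≤ r) (hα0 : 0 < α) (hα : α < 1 / 4)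
    (U W : Finset V) (hUW : Disjoint U W)
    (hbip : ∀ a b : V, G.Adj a b → (a ∈ U ∧ b ∈ W) ∨ (a ∈ W ∧ b ∈ U))
    (hp : 4 * ⌊α ^ r * Real.log W.card⌋₊ ≤ U.card)
    (he : ((U.card : ℝ) * W.card) / 2 ≤ (eBetween G U W : ℝ)) :
    ∃ A B' : Finset V, A ⊆ U ∧ B' ⊆ W ∧
      A.card = ⌊α ^ r * Real.log W.card⌋₊ ∧
      B'.card = ⌊(W.card : ℝ) ^ ((1 : ℝ) - α ^ (r - 1))⌋₊ ∧
      ∀ a ∈ A, ∀ b ∈ B', G.Adj a b :=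
  complete_bipartite_in_dense_bipartite_general G r α hr hα0 hα U W hp he
end

section
/- Every almost colour-critical graph $H$ with $\chi(H)=k\ge 2$ and $v(H)=q$ is a subgraph of $K_{k-1}^{+q}(2q)$, the graph obtained from the complete $(k-1)$-partite graph with all parts of size $2q$ by adding a matching of size $q$ inside the first part. Moreover, $K_{k-1}^{+q}(2q)$ has chromatic number $k$ and is itself almost colour-critical. -/
open Finset

/-- `K_r^{+q}(2q)`: the complete `r`-partite graph with parts of size `2q`, together with
a perfect matching (of size `q`, pairing `2i` with `2i+1`) added inside the first part. -/
def KplusMatching (r q : ℕ) : SimpleGraph (Fin r × Fin (2 * q)) :=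
  SimpleGraph.fromRel (fun p p' => p.1 ≠ p'.1 ∨
    (p.1.val = 0 ∧ p'.1.val = 0 ∧ p.2.val / 2 = p'.2.val / 2))

/-!
The first colour class of an almost-colouring `φ` of `H` induces a matching, i.e. an involution
`m` of the vertex set. Numbering the vertices and putting each orbit `{a, m a}` into the slots
`2i, 2i + 1` gives an injection into `Fin (2q)` sending matched pairs to one matching edge of
`K_{k-1}^{+q}(2q)`; together with `φ` as the part index this embeds `H`.
The target graph is `k`-colourable (split the first part by slot parity) and contains a `k`-clique
(the edge `(0, 0), (0, 1)` and the vertices `(i, 0)`, `i ≠ 0`), so its chromatic number is `k`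
and the projection to the part index is an almost-colouring.
-/

open SimpleGraph Function

theorem exists_involutive_of_symm_of_unique {W : Type*} {R : W → W → Prop}
    (hsymm : ∀ a b, R a b → R b a) (huniq : ∀ a b c, R a b → R a c → b = c) :
    ∃ m : W → W, Involutive m ∧ ∀ a b, R a b → m a = b := by
  classical
  let m a := if h : ∃ b, R a b then h.choose else a
  have hm : ∀ a b, R a b → m a = b := fun a b hab ↦ by
    have h : ∃ b, R a b := ⟨b, hab⟩
    simpa only [m, dif_pos h] using huniq _ _ _ h.choose_spec hab
  refine ⟨m, fun a ↦ ?_, hm⟩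
  by_cases h : ∃ b, R a b
  · obtain ⟨b, hab⟩ := h
    rw [hm a b hab, hm b a (hsymm a b hab)]
  · simp only [m, dif_neg h]

theorem exists_injective_div_two_eq_of_involutive {W : Type*} [Fintype W] {m : W → W}
    (hm : Involutive m) :
    ∃ g : W → Fin (2 * Fintype.card W),
      Injective g ∧ ∀ a, (g (m a)).val / 2 = (g a).val / 2 := by
  let e := Fintype.equivFin W
  -- the orbit `{a, m a}` occupies the slots `2i, 2i + 1` with `i = min (e a) (e (m a))`
  let g a : Fin (2 * Fintype.card W) :=
    ⟨2 * min (e a).val (e (m a)).val + if (e a).val ≤ (e (m a)).val then 0 else 1, by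
      have := (e a).isLt; split_ifs <;> omega⟩
  refine ⟨g, fun a b hab ↦ ?_, fun a ↦ ?_⟩
  · have hab := congrArg Fin.val hab
    simp only [g] at hab
    split_ifs at hab
    · exact e.injective (Fin.ext (by omega))
    · omega
    · omega
    · exact hm.injective (e.injective (Fin.ext (by omega)))
  · simp only [g, hm a]
    split_ifs <;> omega

theorem kplusMatching_adj {r q : ℕ} {p p' : Fin r × Fin (2 * q)} :
    (KplusMatching r q).Adj p p' ↔
      p.1 ≠ p'.1 ∨
        p.1 = p'.1 ∧ p.1.val = 0 ∧ p.2 ≠ p'.2 ∧ p.2.val / 2 = p'.2.val / 2 := by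
  simp only [KplusMatching, fromRel_adj, ne_eq, Prod.ext_iff, Fin.ext_iff]
  omega

theorem colorable_kplusMatching (r q : ℕ) : (KplusMatching r q).Colorable (r + 1) := by
  refine ⟨Coloring.mk
    (fun p ↦ if p.1.val = 0 ∧ p.2.val % 2 = 1 then Fin.last r else p.1.castSucc)
    fun {p p'} hadj ↦ ?_⟩
  rw [kplusMatching_adj] at hadj
  have := p.1.isLt
  have := p'.1.isLt
  simp only [ne_eq, Fin.ext_iff] at hadj ⊢
  split_ifs <;> simp only [Fin.val_last, Fin.val_castSucc] <;> omega

theorem chromaticNumber_kplusMatching {r q : ℕ} (hr : 1 ≤ r) (hq : 1 ≤ q) :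
    (KplusMatching r q).chromaticNumber = r + 1 := by
  refine le_antisymm (colorable_kplusMatching r q).chromaticNumber_le ?_
  let clique : (⊤ : SimpleGraph (Fin (r + 1))) →g KplusMatching r q :=
    { toFun i :=
        if h : i.val < r then (⟨i, h⟩, ⟨0, by omega⟩) else (⟨0, hr⟩, ⟨1, by omega⟩)
      map_rel' := fun {i j} hij ↦ by
        rw [top_adj, ne_eq, Fin.ext_iff] at hij
        rw [kplusMatching_adj]
        have := i.isLt
        have := j.isLt
        split_ifs <;>
          simp only [ne_eq, Fin.ext_iff, not_true_eq_false, true_and, and_true, and_false,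
            or_false] <;>
          omega }
  simpa using chromaticNumber_mono_of_hom clique

theorem almostColourCritical_kplusMatching {r q : ℕ} (hr : 1 ≤ r) (hq : 1 ≤ q) :
    AlmostColourCritical (KplusMatching r q) := by
  refine ⟨r + 1, by exact_mod_cast chromaticNumber_kplusMatching hr hq, Prod.fst, ?_, ?_⟩
  · intro a b c ha hb hc hab hac
    rw [kplusMatching_adj] at hab hac
    simp only [ne_eq, Fin.ext_iff, Prod.ext_iff] at hab hac ⊢
    omega
  · intro a b ha hab hadj
    rw [kplusMatching_adj] at hadj
    simp only [ne_eq, Fin.ext_iff] at hab hadj ha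
    omega

theorem containsCopy_kplusMatching {W : Type*} [Fintype W] {H : SimpleGraph W} {r : ℕ}
    (φ : W → Fin r)
    (hmatch : ∀ a b c : W, (φ a).val = 0 → (φ b).val = 0 → (φ c).val = 0 →
      H.Adj a b → H.Adj a c → b = c)
    (hindep : ∀ a b : W, (φ a).val ≠ 0 → φ a = φ b → ¬ H.Adj a b) :
    ContainsCopy H (KplusMatching r (Fintype.card W)) := by
  let R a b := (φ a).val = 0 ∧ (φ b).val = 0 ∧ H.Adj a b
  obtain ⟨m, hm, hmR⟩ := exists_involutive_of_symm_of_unique (R := R)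
    (fun a b ⟨ha, hb, hab⟩ ↦ ⟨hb, ha, hab.symm⟩)
    (fun a b c ⟨ha, hb, hab⟩ ⟨_, hc, hac⟩ ↦ hmatch a b c ha hb hc hab hac)
  obtain ⟨g, hg, hgm⟩ := exists_injective_div_two_eq_of_involutive hm
  refine ⟨fun a ↦ (φ a, g a), fun a b hab ↦ hg (congrArg Prod.snd hab), fun a b hab ↦ ?_⟩
  rw [kplusMatching_adj]
  by_cases hφ : φ a = φ b
  · have ha : (φ a).val = 0 := by_contra fun ha ↦ hindep a b ha hφ hab
    have hb : (φ b).val = 0 := hφ ▸ ha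
    refine Or.inr ⟨hφ, ha, hg.ne (H.ne_of_adj hab), ?_⟩
    rw [← hgm a, hmR a b ⟨ha, hb, hab⟩]
  · exact Or.inl hφ

theorem almost_colour_critical_subgraph_of_Kplus {W : Type*} [Fintype W]
    (H : SimpleGraph W) (k : ℕ)
    (hacc : AlmostColourCritical H) (hk : H.chromaticNumber = (k : ℕ∞)) (hk2 : 2 ≤ k) :
    ContainsCopy H (KplusMatching (k - 1) (Fintype.card W)) ∧
    (KplusMatching (k - 1) (Fintype.card W)).chromaticNumber = (k : ℕ∞) ∧
    AlmostColourCritical (KplusMatching (k - 1) (Fintype.card W)) := by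
  obtain ⟨k', hk', φ, hmatch, hindep⟩ := hacc
  obtain rfl : k = k' := by exact_mod_cast hk.symm.trans hk'
  have hW : 1 ≤ Fintype.card W := by
    refine Fintype.card_pos_iff.mpr (not_isEmpty_iff.mp fun _ ↦ ?_)
    rw [chromaticNumber_eq_zero_of_isEmpty] at hk
    exact absurd (by exact_mod_cast hk.symm) (show k ≠ 0 by omega)
  refine ⟨containsCopy_kplusMatching φ hmatch hindep, ?_,
    almostColourCritical_kplusMatching (by omega) hW⟩
  rw [chromaticNumber_kplusMatching (by omega) hW]
  exact_mod_cast Nat.sub_add_cancel (by omega)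
end
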